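/- For a Haar-random K-dimensional subspace with projector P_U = U P₀ U† (U Haar on a D = d^n dimensional space, P₀ a fixed rank-K projector), the Haar expectation satisfies E_U[(KB'_S(P_U,P_U) − A'_S(P_U,P_U))/(K²(K+1))] = (1 − 1/K)·(d_S − 1/d_S)/(d^n − 1/d^n). -/

import Mathlib

open scoped BigOperators Matrix
open Matrix

noncomputable section

namespace ApproxKUniform

variable {n d : ℕ}

/-- Hilbert–Schmidt (Frobenius) norm of a square complex matrix. -/
def hsNorm {α : Type*} [Fintype α] (A : Matrix α α ℂ) : ℝ :=
  Real.sqrt ((Aᴴ * A).trace).re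

/-- Combine an assignment on a subset `S` of sites with one on its complement. -/
def glue (S : Finset (Fin n)) (a : {i : Fin n // i ∈ S} → Fin d)
    (c : {i : Fin n // i ∉ S} → Fin d) : Fin n → Fin d :=
  fun i => if h : i ∈ S then a ⟨i, h⟩ else c ⟨i, h⟩

/-- Partial trace (onto subsystem `S`) of an operator `M` on `n` qudits. -/
def optrace (S : Finset (Fin n)) (M : Matrix (Fin n → Fin d) (Fin n → Fin d) ℂ) :
    Matrix ({i : Fin n // i ∈ S} → Fin d) ({i : Fin n // i ∈ S} → Fin d) ℂ :=
  Matrix.of fun a b => ∑ c : {i : Fin n // i ∉ S} → Fin d, M (glue S a c) (glue S b c)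

/-- Reduced density matrix of a pure state `ψ` on subsystem `S`. -/
def rdm (S : Finset (Fin n)) (ψ : (Fin n → Fin d) → ℂ) :
    Matrix ({i : Fin n // i ∈ S} → Fin d) ({i : Fin n // i ∈ S} → Fin d) ℂ :=
  optrace S (Matrix.of fun x y => ψ x * star (ψ y))

/-- Purity `Tr (ρ_S²)` of the reduced state on subsystem `S`. -/
def purity (S : Finset (Fin n)) (ψ : (Fin n → Fin d) → ℂ) : ℝ :=
  ((rdm S ψ * rdm S ψ).trace).re

/-- `ψ` is an ε-approximate k-uniform state (purity form):
`Tr(ρ_S²) ≤ 1/d^k + ε²` for every `S` of size `k`. -/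
def IsApproxUniform (d : ℕ) {n : ℕ} (k : ℕ) (ε : ℝ) (ψ : (Fin n → Fin d) → ℂ) : Prop :=
  ∀ S : Finset (Fin n), S.card = k → purity S ψ ≤ 1 / (d : ℝ) ^ k + ε ^ 2

/-- Rains unitary enumerator `A'_S(P,P) = Tr(P_S²)`. -/
def enumA {n d : ℕ} (S : Finset (Fin n))
    (P : Matrix (Fin n → Fin d) (Fin n → Fin d) ℂ) : ℝ :=
  ((optrace S P * optrace S P).trace).re

/-- Rains unitary enumerator `B'_S(P,P) = Tr(P_{S^c}²)`. -/
def enumB {n d : ℕ} (S : Finset (Fin n))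
    (P : Matrix (Fin n → Fin d) (Fin n → Fin d) ℂ) : ℝ :=
  ((optrace Sᶜ P * optrace Sᶜ P).trace).re

/-- Swap operator on two copies of a system. -/
def swapMat (α : Type*) [DecidableEq α] : Matrix (α × α) (α × α) ℂ :=
  Matrix.of fun x y => if x.1 = y.2 ∧ x.2 = y.1 then 1 else 0


open scoped Kronecker

/-- `mix S u v` is `u` off `S` and `v` on `S`. -/
def mix (S : Finset (Fin n)) (u v : Fin n → Fin d) : Fin n → Fin d :=
  fun i => if i ∈ S then v i else u i

/-- Partial swap: swaps the `S`-registers of the two copies. -/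
def swapS (S : Finset (Fin n)) (d : ℕ) :
    Matrix ((Fin n → Fin d) × (Fin n → Fin d)) ((Fin n → Fin d) × (Fin n → Fin d)) ℂ :=
  Matrix.of fun x y => if x.1 = mix S y.1 y.2 ∧ x.2 = mix S y.2 y.1 then 1 else 0

lemma sum_glue (S : Finset (Fin n)) (f : (Fin n → Fin d) → ℂ) :
    ∑ x, f x = ∑ a : {i : Fin n // i ∈ S} → Fin d, ∑ c : {i : Fin n // i ∉ S} → Fin d,
      f (glue S a c) := by
  rw [← (Equiv.piEquivPiSubtypeProd (· ∈ S) fun _ => Fin d).symm.sum_comp f,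
    Fintype.sum_prod_type]
  rfl

lemma mix_glue₁ (S : Finset (Fin n)) (a b : {i : Fin n // i ∈ S} → Fin d)
    (c e : {i : Fin n // i ∉ S} → Fin d) :
    mix S (glue S a c) (glue S b e) = glue S b c := by
  funext i
  by_cases h : i ∈ S <;> simp [mix, glue, h]

lemma glue_left_inj (S : Finset (Fin n)) {a b : {i : Fin n // i ∈ S} → Fin d}
    (c : {i : Fin n // i ∉ S} → Fin d) :
    glue S a c = glue S b c ↔ a = b := by
  constructor
  · intro h
    funext i
    have := congrFun h i.1
    simpa [glue, i.2] using this
  · rintro rfl; rfl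

lemma mix_compl (S : Finset (Fin n)) (u v : Fin n → Fin d) :
    mix Sᶜ u v = mix S v u := by
  funext i
  by_cases h : i ∈ S <;> simp [mix, h]

lemma kron_swapS_trace (S : Finset (Fin n)) (A B : Matrix (Fin n → Fin d) (Fin n → Fin d) ℂ) :
    ((A ⊗ₖ B) * swapS S d).trace = (optrace S A * optrace S B).trace := by
  have key : ∀ u v : Fin n → Fin d,
      (∑ y : (Fin n → Fin d) × (Fin n → Fin d),
        A u y.1 * B v y.2 * swapS S d y (u, v)) = A u (mix S u v) * B v (mix S v u) := by
    intro u v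
    rw [Fintype.sum_prod_type]
    simp [swapS, ite_and, mul_ite, Finset.sum_ite_eq', Finset.sum_ite_eq]
  calc ((A ⊗ₖ B) * swapS S d).trace
      = ∑ x : (Fin n → Fin d) × (Fin n → Fin d),
          A x.1 (mix S x.1 x.2) * B x.2 (mix S x.2 x.1) := by
        simp only [Matrix.trace, Matrix.diag, Matrix.mul_apply, kroneckerMap_apply]
        exact Finset.sum_congr rfl fun x _ => key x.1 x.2
    _ = ∑ a : {i : Fin n // i ∈ S} → Fin d, ∑ c : {i : Fin n // i ∉ S} → Fin d,
          ∑ b : {i : Fin n // i ∈ S} → Fin d, ∑ e : {i : Fin n // i ∉ S} → Fin d,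
          A (glue S a c) (glue S b c) * B (glue S b e) (glue S a e) := by
        rw [Fintype.sum_prod_type, sum_glue S]
        refine Finset.sum_congr rfl fun a _ => Finset.sum_congr rfl fun c _ => ?_
        rw [sum_glue S]
        refine Finset.sum_congr rfl fun b _ => Finset.sum_congr rfl fun e _ => ?_
        rw [mix_glue₁, mix_glue₁]
    _ = (optrace S A * optrace S B).trace := by
        simp only [Matrix.trace, Matrix.diag, Matrix.mul_apply, optrace, of_apply]
        refine Finset.sum_congr rfl fun a _ => ?_
        rw [Finset.sum_comm]
        refine Finset.sum_congr rfl fun b _ => ?_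
        rw [Finset.sum_mul_sum]

lemma optrace_one (S : Finset (Fin n)) :
    optrace (d := d) S 1 =
      (Fintype.card ({i : Fin n // i ∉ S} → Fin d) : ℂ) • 1 := by
  ext a b
  simp only [optrace, of_apply, Matrix.one_apply, Matrix.smul_apply, smul_eq_mul]
  rcases eq_or_ne a b with h | h
  · subst h; simp
  · have : ∀ c : {i : Fin n // i ∉ S} → Fin d, glue S a c ≠ glue S b c := fun c hc =>
      h ((glue_left_inj S c).mp hc)
    simp [this, h]

lemma swap_mul_swapS (S : Finset (Fin n)) :
    swapMat (Fin n → Fin d) * swapS S d = swapS Sᶜ d := by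
  ext x y
  rw [Matrix.mul_apply]
  have h1 : ∀ z, swapMat (Fin n → Fin d) x z * swapS S d z y =
      if z = (x.2, x.1) then swapS S d z y else 0 := by
    intro z
    rcases eq_or_ne z (x.2, x.1) with h | h
    · subst h; simp [swapMat]
    · have hc : ¬(x.1 = z.2 ∧ x.2 = z.1) := by
        rintro ⟨h1, h2⟩; exact h (Prod.ext h2.symm h1.symm)
      simp [swapMat, hc, h]
  simp only [h1]
  rw [Finset.sum_ite_eq' Finset.univ (x.2, x.1)]
  simp only [Finset.mem_univ, if_true]
  have hiff : (x.2 = mix S y.1 y.2 ∧ x.1 = mix S y.2 y.1) ↔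
      (x.1 = mix Sᶜ y.1 y.2 ∧ x.2 = mix Sᶜ y.2 y.1) := by
    rw [mix_compl, mix_compl]; exact and_comm
  show (if x.2 = mix S y.1 y.2 ∧ x.1 = mix S y.2 y.1 then (1:ℂ) else 0) =
    (if x.1 = mix Sᶜ y.1 y.2 ∧ x.2 = mix Sᶜ y.2 y.1 then (1:ℂ) else 0)
  exact if_congr hiff rfl rfl

lemma trace_swap_mul_kron {α : Type*} [Fintype α] [DecidableEq α] (A B : Matrix α α ℂ) :
    (swapMat α * (A ⊗ₖ B)).trace = (A * B).trace := by
  have h : ∀ x : α × α, (swapMat α * (A ⊗ₖ B)) x x = A x.2 x.1 * B x.1 x.2 := by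
    intro x
    rw [Matrix.mul_apply]
    have h1 : ∀ z, swapMat α x z * (A ⊗ₖ B) z x =
        if z = (x.2, x.1) then (A ⊗ₖ B) z x else 0 := by
      intro z
      rcases eq_or_ne z (x.2, x.1) with h | h
      · subst h; simp [swapMat]
      · have hc : ¬(x.1 = z.2 ∧ x.2 = z.1) := by
          rintro ⟨h1, h2⟩; exact h (Prod.ext h2.symm h1.symm)
        simp [swapMat, hc, h]
    simp only [h1]
    rw [Finset.sum_ite_eq' Finset.univ (x.2, x.1)]
    simp [kroneckerMap_apply]
  calc (swapMat α * (A ⊗ₖ B)).trace = ∑ x : α × α, A x.2 x.1 * B x.1 x.2 := by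
        simp only [Matrix.trace, Matrix.diag]
        exact Finset.sum_congr rfl fun x _ => h x
    _ = (B * A).trace := by
        rw [Fintype.sum_prod_type]
        simp only [Matrix.trace, Matrix.diag, Matrix.mul_apply]
        refine Finset.sum_congr rfl fun u _ => Finset.sum_congr rfl fun v _ => mul_comm _ _
    _ = (A * B).trace := Matrix.trace_mul_comm _ _

lemma kron_conjTranspose {α : Type*} [Fintype α] (A B : Matrix α α ℂ) :
    (A ⊗ₖ B)ᴴ = Aᴴ ⊗ₖ Bᴴ := by
  ext x y
  simp [Matrix.conjTranspose_apply, kroneckerMap_apply, mul_comm]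

lemma card_in (S : Finset (Fin n)) :
    Fintype.card ({i : Fin n // i ∈ S} → Fin d) = d ^ S.card := by
  rw [Fintype.card_fun, Fintype.card_fin]
  congr 1
  exact Fintype.card_coe S

lemma card_out (S : Finset (Fin n)) :
    Fintype.card ({i : Fin n // i ∉ S} → Fin d) = d ^ (n - S.card) := by
  rw [Fintype.card_fun, Fintype.card_fin]
  congr 1
  rw [Fintype.card_subtype_compl, Fintype.card_fin]
  congr 1
  exact Fintype.card_coe S

lemma swapS_trace (S : Finset (Fin n)) :
    (swapS S d).trace = ((d:ℂ) ^ (n - S.card)) ^ 2 * (d:ℂ) ^ S.card := by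
  conv_lhs => rw [show swapS S d = (1 ⊗ₖ 1) * swapS S d by
    rw [Matrix.one_kronecker_one, one_mul]]
  rw [kron_swapS_trace, optrace_one, Matrix.smul_mul, Matrix.mul_smul, one_mul,
    Matrix.trace_smul, Matrix.trace_smul, Matrix.trace_one, smul_eq_mul, smul_eq_mul,
    card_in, card_out]
  push_cast
  ring

lemma final_algebra (K a b : ℂ) (hK : K ≠ 0) (hK1 : K + 1 ≠ 0) (ha : a ≠ 0) (hb : b ≠ 0)
    (hab : (b * a) ^ 2 - 1 ≠ 0) :
    (K * (((K * K - K / (b * a)) / ((b * a) ^ 2 - 1)) * (a ^ 2 * b) +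
            ((K - K * K / (b * a)) / ((b * a) ^ 2 - 1)) * (b ^ 2 * a)) -
        (((K * K - K / (b * a)) / ((b * a) ^ 2 - 1)) * (b ^ 2 * a) +
            ((K - K * K / (b * a)) / ((b * a) ^ 2 - 1)) * (a ^ 2 * b))) /
        (K ^ 2 * (K + 1)) =
      (1 - 1 / K) * ((a - 1 / a) / (b * a - 1 / (b * a))) := by
  have hba : b * a ≠ 0 := mul_ne_zero hb ha
  have e : b * a - 1 / (b * a) = ((b * a) ^ 2 - 1) / (b * a) := by
    field_simp
  rw [e]
  field_simp
  ring


lemma re_helper (pr c Kr : ℝ) (zA zB : ℂ) :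
    pr * ((Kr * zB.re - zA.re) / c) = ((pr : ℂ) * (((Kr:ℂ) * zB - zA) / (c:ℂ))).re := by
  have h : (pr : ℂ) * (((Kr:ℂ) * zB - zA) / (c:ℂ)) =
      ((pr / c : ℝ) : ℂ) * ((Kr:ℂ) * zB - zA) := by
    push_cast; ring
  rw [h, Complex.re_ofReal_mul, Complex.sub_re, Complex.re_ofReal_mul]
  ring

open scoped Kronecker in
/-- For a Haar-random `K`-dimensional subspace with projector
`P_U = U P₀ U†` (here the Haar ensemble is represented by any ensemble `(p, U)` which
is a unitary 2-design, which fixes all the required second moments), the expectation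
satisfies `E_U[(K·B'_S(P_U,P_U) − A'_S(P_U,P_U))/(K²(K+1))]
  = (1 − 1/K)·(d_S − 1/d_S)/(d^n − 1/d^n)`. -/
theorem haar_average_enum {n d K : ℕ} (hd : 1 < d) (hn : 0 < n) (hK : 0 < K)
    {ι : Type*} [Fintype ι] (p : ι → ℝ) (hp0 : ∀ i, 0 ≤ p i) (hp1 : ∑ i, p i = 1)
    (U : ι → Matrix (Fin n → Fin d) (Fin n → Fin d) ℂ)
    (hU : ∀ i, U i ∈ Matrix.unitaryGroup (Fin n → Fin d) ℂ)
    (P₀ : Matrix (Fin n → Fin d) (Fin n → Fin d) ℂ)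
    (hP₀ : P₀.IsHermitian) (hproj : P₀ * P₀ = P₀) (hrank : P₀.trace = K)
    (hdesign : ∀ O : Matrix ((Fin n → Fin d) × (Fin n → Fin d))
        ((Fin n → Fin d) × (Fin n → Fin d)) ℂ,
      ∑ i, (p i : ℂ) • ((U i ⊗ₖ U i) * O * (U i ⊗ₖ U i)ᴴ) =
        ((O.trace - (swapMat (Fin n → Fin d) * O).trace / ((d : ℂ) ^ n)) /
            (((d : ℂ) ^ n) ^ 2 - 1)) • (1 : Matrix _ _ ℂ) +
        (((swapMat (Fin n → Fin d) * O).trace - O.trace / ((d : ℂ) ^ n)) /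
            (((d : ℂ) ^ n) ^ 2 - 1)) • swapMat (Fin n → Fin d))
    (S : Finset (Fin n)) :
    ∑ i, p i * (((K : ℝ) * enumB S (U i * P₀ * (U i)ᴴ) -
          enumA S (U i * P₀ * (U i)ᴴ)) / ((K : ℝ) ^ 2 * ((K : ℝ) + 1))) =
      (1 - 1 / (K : ℝ)) *
        (((d : ℝ) ^ S.card - 1 / (d : ℝ) ^ S.card) /
          ((d : ℝ) ^ n - 1 / (d : ℝ) ^ n)) := by
  classical
  set P : ι → Matrix (Fin n → Fin d) (Fin n → Fin d) ℂ := fun i => U i * P₀ * (U i)ᴴ with hPdef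
  have hgoal : ∀ i, U i * P₀ * (U i)ᴴ = P i := fun i => by rw [hPdef]
  simp only [hgoal]
  have hs : S.card ≤ n := by simpa using S.card_le_univ
  have hd0 : (d : ℂ) ≠ 0 := Nat.cast_ne_zero.mpr (by omega)
  have hK0 : (K : ℂ) ≠ 0 := Nat.cast_ne_zero.mpr hK.ne'
  have hK1 : (K : ℂ) + 1 ≠ 0 := by
    have : ((K + 1 : ℕ) : ℂ) ≠ 0 := Nat.cast_ne_zero.mpr (by omega)
    push_cast at this
    exact this
  have ha : (d : ℂ) ^ S.card ≠ 0 := pow_ne_zero _ hd0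
  have hb : (d : ℂ) ^ (n - S.card) ≠ 0 := pow_ne_zero _ hd0
  have hdn : (d : ℂ) ^ n = (d : ℂ) ^ (n - S.card) * (d : ℂ) ^ S.card := by
    rw [← pow_add, Nat.sub_add_cancel hs]
  have hab : (((d : ℂ) ^ (n - S.card)) * ((d : ℂ) ^ S.card)) ^ 2 - 1 ≠ 0 := by
    rw [← hdn]
    have h2 : ((d : ℂ) ^ n) ^ 2 = ((d ^ n * d ^ n : ℕ) : ℂ) := by push_cast; ring
    rw [h2]
    intro h
    have h2' : ((d ^ n * d ^ n : ℕ) : ℂ) = ((1 : ℕ) : ℂ) := by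
      rw [Nat.cast_one]; linear_combination h
    have h3 : d ^ n * d ^ n = 1 := Nat.cast_injective h2'
    have h4 : 1 < d ^ n := Nat.one_lt_pow (by omega) hd
    nlinarith
  -- the design applied to `P₀ ⊗ₖ P₀`
  have hO1 : (P₀ ⊗ₖ P₀).trace = (K : ℂ) * K := by rw [Matrix.trace_kronecker, hrank]
  have hO2 : (swapMat (Fin n → Fin d) * (P₀ ⊗ₖ P₀)).trace = (K : ℂ) := by
    rw [trace_swap_mul_kron, hproj, hrank]
  have hM := hdesign (P₀ ⊗ₖ P₀)
  rw [hO1, hO2] at hM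
  have hPkron : ∀ i, (U i ⊗ₖ U i) * (P₀ ⊗ₖ P₀) * (U i ⊗ₖ U i)ᴴ = P i ⊗ₖ P i := by
    intro i
    rw [kron_conjTranspose, ← Matrix.mul_kronecker_mul, ← Matrix.mul_kronecker_mul, hgoal]
  simp only [hPkron] at hM
  -- second moments against partial swaps
  have key : ∀ T : Finset (Fin n),
      ∑ i, (p i : ℂ) * ((P i ⊗ₖ P i) * swapS T d).trace =
        (((K : ℂ) * K - (K : ℂ) / (d : ℂ) ^ n) / (((d : ℂ) ^ n) ^ 2 - 1)) *
            (swapS T d).trace +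
          (((K : ℂ) - (K : ℂ) * K / (d : ℂ) ^ n) / (((d : ℂ) ^ n) ^ 2 - 1)) *
            (swapS Tᶜ d).trace := by
    intro T
    have h1 : ∑ i, (p i : ℂ) * ((P i ⊗ₖ P i) * swapS T d).trace =
        ((∑ i, (p i : ℂ) • (P i ⊗ₖ P i)) * swapS T d).trace := by
      rw [Matrix.sum_mul, Matrix.trace_sum]
      exact Finset.sum_congr rfl fun i _ => by
        rw [Matrix.smul_mul, Matrix.trace_smul, smul_eq_mul]
    rw [h1, hM, Matrix.add_mul, Matrix.smul_mul, Matrix.smul_mul, one_mul, swap_mul_swapS,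
      Matrix.trace_add, Matrix.trace_smul, Matrix.trace_smul, smul_eq_mul, smul_eq_mul]
  have keyB := key Sᶜ
  rw [compl_compl] at keyB
  have hTSc : (swapS Sᶜ d).trace = ((d : ℂ) ^ S.card) ^ 2 * (d : ℂ) ^ (n - S.card) := by
    rw [swapS_trace, Finset.card_compl, Fintype.card_fin, Nat.sub_sub_self hs]
  -- identify the enumerators with swap traces
  have hEA : ∀ i, enumA S (P i) = (((P i ⊗ₖ P i) * swapS S d).trace).re := by
    intro i
    rw [enumA, ← kron_swapS_trace]
  have hEB : ∀ i, enumB S (P i) = (((P i ⊗ₖ P i) * swapS Sᶜ d).trace).re := by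
    intro i
    rw [enumB, ← kron_swapS_trace]
  -- pass to a single complex computation
  have hre : ∀ i, p i * (((K : ℝ) * enumB S (P i) - enumA S (P i)) /
        ((K : ℝ) ^ 2 * ((K : ℝ) + 1))) =
      ((p i : ℂ) * (((K : ℂ) * ((P i ⊗ₖ P i) * swapS Sᶜ d).trace -
          ((P i ⊗ₖ P i) * swapS S d).trace) / ((K : ℂ) ^ 2 * ((K : ℂ) + 1)))).re := by
    intro i
    rw [hEA, hEB, re_helper (p i) ((K : ℝ) ^ 2 * ((K : ℝ) + 1)) (K : ℝ)
      (((P i ⊗ₖ P i) * swapS S d).trace) (((P i ⊗ₖ P i) * swapS Sᶜ d).trace)]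
    congr 2 <;> push_cast <;> ring
  have hsum : ∑ i, (p i : ℂ) * (((K : ℂ) * ((P i ⊗ₖ P i) * swapS Sᶜ d).trace -
        ((P i ⊗ₖ P i) * swapS S d).trace) / ((K : ℂ) ^ 2 * ((K : ℂ) + 1))) =
      (((1 - 1 / (K : ℝ)) * (((d : ℝ) ^ S.card - 1 / (d : ℝ) ^ S.card) /
          ((d : ℝ) ^ n - 1 / (d : ℝ) ^ n)) : ℝ) : ℂ) := by
    have expand : ∑ i, (p i : ℂ) * (((K : ℂ) * ((P i ⊗ₖ P i) * swapS Sᶜ d).trace -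
          ((P i ⊗ₖ P i) * swapS S d).trace) / ((K : ℂ) ^ 2 * ((K : ℂ) + 1))) =
        ((K : ℂ) * (∑ i, (p i : ℂ) * ((P i ⊗ₖ P i) * swapS Sᶜ d).trace) -
          ∑ i, (p i : ℂ) * ((P i ⊗ₖ P i) * swapS S d).trace) /
            ((K : ℂ) ^ 2 * ((K : ℂ) + 1)) := by
      rw [Finset.mul_sum, ← Finset.sum_sub_distrib, Finset.sum_div]
      exact Finset.sum_congr rfl fun i _ => by ring
    have hcast : (((1 - 1 / (K : ℝ)) * (((d : ℝ) ^ S.card - 1 / (d : ℝ) ^ S.card) /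
          ((d : ℝ) ^ n - 1 / (d : ℝ) ^ n)) : ℝ) : ℂ) =
        (1 - 1 / (K : ℂ)) * (((d : ℂ) ^ S.card - 1 / (d : ℂ) ^ S.card) /
          ((d : ℂ) ^ n - 1 / (d : ℂ) ^ n)) := by
      push_cast; ring
    rw [expand, key S, keyB, hcast, swapS_trace S, hTSc, hdn]
    exact final_algebra (K : ℂ) ((d : ℂ) ^ S.card) ((d : ℂ) ^ (n - S.card)) hK0 hK1 ha hb hab
  calc ∑ i, p i * (((K : ℝ) * enumB S (P i) - enumA S (P i)) /
        ((K : ℝ) ^ 2 * ((K : ℝ) + 1)))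
      = (∑ i, (p i : ℂ) * (((K : ℂ) * ((P i ⊗ₖ P i) * swapS Sᶜ d).trace -
          ((P i ⊗ₖ P i) * swapS S d).trace) / ((K : ℂ) ^ 2 * ((K : ℂ) + 1)))).re := by
        rw [Complex.re_sum]
        exact Finset.sum_congr rfl fun i _ => hre i
    _ = _ := by rw [hsum, Complex.ofReal_re]

end ApproxKUniform
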